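/- arXiv:2211.01124 — 4 statements merged into one kernel-verified Lean document; each statement's English description precedes it below -/
import Mathlib

section
/- Let f̃ : ℝⁿ → ℝⁿ and A : ℝⁿ → ℝⁿ be maps with sup_{x} ‖f̃(x) − A(x)‖ ≤ c for some constant c, where A is linear. Suppose Π : ℝⁿ → ℝⁿ is a linear projection commuting with A such that ‖Π(A w)‖ ≥ β‖Π w‖ for all w, with β > 1, and ‖Π‖ ≤ 1. Then for all x, y ∈ ℝⁿ and all k ≥ 1, ‖Π(f̃ᵏ(x) − f̃ᵏ(y))‖ ≥ βᵏ(‖Π(x − y)‖ − C) where C = 2c/(β − 1). -/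
/-- Expansion estimate along a projection commuting with the linear part, for a map at
bounded distance from a linear map. -/
theorem stmt6 (n : ℕ) (f : EuclideanSpace ℝ (Fin n) → EuclideanSpace ℝ (Fin n))
    (A Pr : EuclideanSpace ℝ (Fin n) →ₗ[ℝ] EuclideanSpace ℝ (Fin n))
    (c β : ℝ) (hβ : 1 < β)
    (hc : ∀ x, ‖f x - A x‖ ≤ c)
    (hidem : Pr ∘ₗ Pr = Pr)
    (hcomm : Pr ∘ₗ A = A ∘ₗ Pr)
    (hnorm : ∀ w, ‖Pr w‖ ≤ ‖w‖)
    (hexp : ∀ w, β * ‖Pr w‖ ≤ ‖Pr (A w)‖) :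
    ∀ (x y : EuclideanSpace ℝ (Fin n)) (k : ℕ), 1 ≤ k →
      β ^ k * (‖Pr (x - y)‖ - 2 * c / (β - 1)) ≤ ‖Pr (f^[k] x - f^[k] y)‖ := by
  have hβ0 : (0 : ℝ) < β - 1 := by linarith
  have hc0 : 0 ≤ c := le_trans (norm_nonneg _) (hc 0)
  -- one-step estimate
  have step : ∀ u v, β * ‖Pr (u - v)‖ - 2 * c ≤ ‖Pr (f u - f v)‖ := by
    intro u v
    have hdecomp : Pr (f u - f v) = Pr (A (u - v)) + Pr ((f u - A u) - (f v - A v)) := by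
      rw [← map_add]
      congr 1
      simp [map_sub]
      abel
    have h1 : ‖Pr ((f u - A u) - (f v - A v))‖ ≤ 2 * c := by
      calc ‖Pr ((f u - A u) - (f v - A v))‖ ≤ ‖(f u - A u) - (f v - A v)‖ := hnorm _
        _ ≤ ‖f u - A u‖ + ‖f v - A v‖ := norm_sub_le _ _
        _ ≤ 2 * c := by have := hc u; have := hc v; linarith
    have h2 : ‖Pr (A (u - v))‖ - ‖Pr ((f u - A u) - (f v - A v))‖ ≤ ‖Pr (f u - f v)‖ := by
      rw [hdecomp]
      have := norm_add_le (Pr (A (u - v)) + Pr ((f u - A u) - (f v - A v)))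
        (-(Pr ((f u - A u) - (f v - A v))))
      simp at this
      linarith [norm_neg (Pr ((f u - A u) - (f v - A v))),
        norm_le_add_norm_add (Pr (A (u - v))) (Pr ((f u - A u) - (f v - A v)))]
    have h3 := hexp (u - v)
    linarith
  intro x y k hk
  -- strengthened induction
  have key : ∀ m : ℕ, β ^ m * ‖Pr (x - y)‖ - 2 * c * (β ^ m - 1) / (β - 1)
      ≤ ‖Pr (f^[m] x - f^[m] y)‖ := by
    intro m
    induction m with
    | zero => simp
    | succ m ih =>
      rw [Function.iterate_succ_apply', Function.iterate_succ_apply']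
      have h := step (f^[m] x) (f^[m] y)
      have hmul : β * (β ^ m * ‖Pr (x - y)‖ - 2 * c * (β ^ m - 1) / (β - 1))
          ≤ β * ‖Pr (f^[m] x - f^[m] y)‖ :=
        mul_le_mul_of_nonneg_left ih (by linarith)
      have : β ^ (m + 1) * ‖Pr (x - y)‖ - 2 * c * (β ^ (m + 1) - 1) / (β - 1)
          = β * (β ^ m * ‖Pr (x - y)‖ - 2 * c * (β ^ m - 1) / (β - 1)) - 2 * c := by
        field_simp
        ring
      linarith
  have hbk : (0 : ℝ) < β ^ k := pow_pos (by linarith) k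
  have hmono : β ^ k * (‖Pr (x - y)‖ - 2 * c / (β - 1))
      ≤ β ^ k * ‖Pr (x - y)‖ - 2 * c * (β ^ k - 1) / (β - 1) := by
    rw [mul_sub]
    have : 2 * c * (β ^ k - 1) / (β - 1) ≤ β ^ k * (2 * c / (β - 1)) := by
      rw [mul_div_assoc', div_le_div_iff₀ hβ0 hβ0]
      nlinarith [mul_nonneg hc0 hβ0.le]
    linarith
  linarith [key k]
end

section
/- Let f̃ : ℝⁿ → ℝⁿ and A be as follows: sup ‖f̃ − A‖ ≤ c with A linear, and Π a norm-nonincreasing linear projection commuting with A such that ‖Π(Aw)‖ ≥ ‖Πw‖ for all w. Then for all x, y and all k ≥ 1, ‖f̃ᵏ(x) − f̃ᵏ(y)‖ ≥ ‖Π(x − y)‖ − 2ck. -/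
/-- Linear lower bound for separation of iterates when the projected linear part is
norm-nondecreasing. -/
theorem stmt7 (n : ℕ) (f : EuclideanSpace ℝ (Fin n) → EuclideanSpace ℝ (Fin n))
    (A Pr : EuclideanSpace ℝ (Fin n) →ₗ[ℝ] EuclideanSpace ℝ (Fin n))
    (c : ℝ)
    (hc : ∀ x, ‖f x - A x‖ ≤ c)
    (hidem : Pr ∘ₗ Pr = Pr)
    (hcomm : Pr ∘ₗ A = A ∘ₗ Pr)
    (hnorm : ∀ w, ‖Pr w‖ ≤ ‖w‖)
    (hexp : ∀ w, ‖Pr w‖ ≤ ‖Pr (A w)‖) :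
    ∀ (x y : EuclideanSpace ℝ (Fin n)) (k : ℕ), 1 ≤ k →
      ‖Pr (x - y)‖ - 2 * c * (k : ℝ) ≤ ‖f^[k] x - f^[k] y‖ := by
  intro x y k _
  have key : ∀ m : ℕ, ‖Pr (x - y)‖ - 2 * c * (m : ℝ) ≤ ‖Pr (f^[m] x - f^[m] y)‖ := by
    intro m
    induction m with
    | zero => simp
    | succ m ih =>
      set u := f^[m] x
      set v := f^[m] y
      have hiter : f^[m+1] x - f^[m+1] y = f u - f v := by
        simp [Function.iterate_succ_apply', u, v]
      have hdecomp : Pr (f u - f v) = Pr (A (u - v)) + Pr ((f u - A u) - (f v - A v)) := by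
        simp only [map_sub]
        abel
      have h1 : ‖Pr (A (u - v))‖ - ‖Pr ((f u - A u) - (f v - A v))‖ ≤ ‖Pr (f u - f v)‖ := by
        rw [hdecomp]
        set a := Pr (A (u - v))
        set b := Pr ((f u - A u) - (f v - A v))
        have h0 : ‖a‖ ≤ ‖a + b‖ + ‖b‖ := by
          have := norm_add_le (a + b) (-b)
          simpa using this
        linarith
      have h2 : ‖Pr ((f u - A u) - (f v - A v))‖ ≤ 2 * c := by
        calc ‖Pr ((f u - A u) - (f v - A v))‖ ≤ ‖(f u - A u) - (f v - A v)‖ := hnorm _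
          _ ≤ ‖f u - A u‖ + ‖f v - A v‖ := norm_sub_le _ _
          _ ≤ c + c := add_le_add (hc u) (hc v)
          _ = 2 * c := by ring
      have h3 : ‖Pr (u - v)‖ ≤ ‖Pr (A (u - v))‖ := hexp _
      rw [hiter]
      push_cast
      nlinarith [ih]
  calc ‖Pr (x - y)‖ - 2 * c * (k : ℝ) ≤ ‖Pr (f^[k] x - f^[k] y)‖ := key k
    _ ≤ ‖f^[k] x - f^[k] y‖ := hnorm _
end

section
/- Let H : ℝⁿ → ℝⁿ be continuous with sup_x ‖H(x) − x‖ ≤ c, and let A : ℝⁿ → ℝⁿ be an invertible linear map with H ∘ f̃ = A ∘ H for a map f̃ : ℝⁿ → ℝⁿ. Then H(x) = H(y) if and only if sup_{k ∈ ℤ} ‖f̃ᵏ(x) − f̃ᵏ(y)‖ ≤ 2c, where f̃ is assumed to be a bijection so that iterates for all k ∈ ℤ are defined and satisfy H ∘ f̃ᵏ = Aᵏ ∘ H, under the additional hypothesis that for every w ≠ 0, sup_{k ∈ ℤ} ‖Aᵏ w‖ = ∞. -/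
/-!
Iterating the semiconjugacy gives `H ∘ f̃ᵏ = Aᵏ ∘ H` for all `k : ℤ`, and since `H` is within `c`
of the identity, `‖H x - H y‖` and `‖x - y‖` differ by at most `2c`. If `H x = H y`, every pair
of iterates therefore stays `2c` apart. Conversely, if the orbits stay `2c` apart, the full
`A`-orbit of `H x - H y` is bounded by `4c`, which forces `H x = H y`.
-/

section SemiconjZpow

variable {G G' α β : Type*} [Group G] [Group G'] [MulAction G α] [MulAction G' β]

lemma zpow_smul_eq_of_smul_eq {H : α → β} {g : G} {g' : G'} (h : ∀ x, H (g • x) = g' • H x)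
    (k : ℤ) (x : α) : H (g ^ k • x) = g' ^ k • H x := by
  induction k using Int.induction_on generalizing x with
  | zero => simp
  | succ i ih => rw [zpow_add_one, zpow_add_one, mul_smul, mul_smul, ih, h]
  | pred i ih =>
    have h_inv : H (g⁻¹ • x) = g'⁻¹ • H x := by
      rw [eq_inv_smul_iff, ← h, smul_inv_smul]
    rw [zpow_sub_one, zpow_sub_one, mul_smul, mul_smul, ih, h_inv]

end SemiconjZpow

section CloseToIdentity

variable {E : Type*} [SeminormedAddCommGroup E] {H : E → E} {c : ℝ}

lemma norm_sub_le_of_map_eq (hH : ∀ x, ‖H x - x‖ ≤ c) {x y : E} (hxy : H x = H y) :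
    ‖x - y‖ ≤ 2 * c := by
  calc ‖x - y‖ = ‖(x - H x) + (H y - y)‖ := by rw [hxy]; abel_nf
    _ ≤ ‖x - H x‖ + ‖H y - y‖ := norm_add_le _ _
    _ ≤ c + c := add_le_add (norm_sub_rev x (H x) ▸ hH x) (hH y)
    _ = 2 * c := by ring

lemma norm_map_sub_map_le (hH : ∀ x, ‖H x - x‖ ≤ c) (x y : E) :
    ‖H x - H y‖ ≤ c + ‖x - y‖ + c := by
  calc ‖H x - H y‖ = ‖(H x - x) + (x - y) + (y - H y)‖ := by abel_nf
    _ ≤ ‖H x - x‖ + ‖x - y‖ + ‖y - H y‖ := norm_add₃_le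
    _ ≤ c + ‖x - y‖ + c := by gcongr; exacts [hH x, norm_sub_rev y (H y) ▸ hH y]

end CloseToIdentity

theorem stmt12_general (n : ℕ) (c : ℝ)
    (H : EuclideanSpace ℝ (Fin n) → EuclideanSpace ℝ (Fin n))
    (hHc : ∀ x, ‖H x - x‖ ≤ c)
    (A : EuclideanSpace ℝ (Fin n) ≃ₗ[ℝ] EuclideanSpace ℝ (Fin n))
    (f : Equiv.Perm (EuclideanSpace ℝ (Fin n)))
    (hsemi : ∀ x, H (f x) = A (H x))
    (hA : ∀ w : EuclideanSpace ℝ (Fin n), w ≠ 0 → ∀ R : ℝ, ∃ k : ℤ, R ≤ ‖(A ^ k) w‖) :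
    ∀ x y : EuclideanSpace ℝ (Fin n),
      H x = H y ↔ ∀ k : ℤ, ‖(f ^ k) x - (f ^ k) y‖ ≤ 2 * c := by
  have hsemi_zpow (k : ℤ) (x) : H ((f ^ k) x) = (A ^ k) (H x) :=
    zpow_smul_eq_of_smul_eq (g := f) (g' := A) hsemi k x
  intro x y
  refine ⟨fun hxy k ↦ norm_sub_le_of_map_eq hHc (by rw [hsemi_zpow, hsemi_zpow, hxy]), ?_⟩
  intro horbit
  by_contra hne
  obtain ⟨k, hk⟩ := hA (H x - H y) (sub_ne_zero.mpr hne) (4 * c + 1)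
  have hk_bound : ‖(A ^ k) (H x - H y)‖ ≤ 4 * c := by
    rw [map_sub, ← hsemi_zpow, ← hsemi_zpow]
    linarith [norm_map_sub_map_le hHc ((f ^ k) x) ((f ^ k) y), horbit k]
  linarith

/-- Fibers of a semiconjugacy to a linear map with no nonzero bounded full orbit are
characterized by bounded mutual orbit distance. -/
theorem stmt12 (n : ℕ) (c : ℝ)
    (H : EuclideanSpace ℝ (Fin n) → EuclideanSpace ℝ (Fin n)) (hHcont : Continuous H)
    (hHc : ∀ x, ‖H x - x‖ ≤ c)
    (A : EuclideanSpace ℝ (Fin n) ≃ₗ[ℝ] EuclideanSpace ℝ (Fin n))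
    (f : Equiv.Perm (EuclideanSpace ℝ (Fin n)))
    (hsemi : ∀ x, H (f x) = A (H x))
    (hA : ∀ w : EuclideanSpace ℝ (Fin n), w ≠ 0 → ∀ R : ℝ, ∃ k : ℤ, R ≤ ‖(A ^ k) w‖) :
    ∀ x y : EuclideanSpace ℝ (Fin n),
      H x = H y ↔ ∀ k : ℤ, ‖(f ^ k) x - (f ^ k) y‖ ≤ 2 * c :=
  stmt12_general n c H hHc A f hsemi hA
end

section
/- Let ℱ be a family of pairwise disjoint subsets of ℝⁿ (a 'foliation' in the set-theoretic sense of a partition) that is invariant under ℤⁿ-translations, and suppose each member of ℱ is contained in the 2T-neighborhood of a translate of a fixed linear hyperplane P and contains a point within distance 2T of every point of that translate. If x, y lie in the same member F of the partition and the partition is uniformly properly embedded with proper gauge φ (i.e., u, v in the same member with ‖u − v‖ ≤ A implies d_F(u,v) ≤ φ(A) for a monotone φ), then d_F(x, y) ≤ φ(4T + 1)·(‖x − y‖ + 1). -/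
/-!
Subdivide the segment from `x` to `y` into `⌊‖x - y‖⌋₊ + 1` pieces of length at most `1` and
project the subdivision points orthogonally onto the translate `v₀ + P`. The `2T`-thickening of
`v₀ + P` is convex, so it contains the whole segment and every projected point is `2T`-close to
the segment; since projection is `1`-Lipschitz, consecutive projected points are `1`-close. Each
projected point has a point of `F` within `2T`, so consecutive points of the resulting chain in
`F` are `(4T + 1)`-close, each step costs at most `φ (4T + 1)`, and the triangle inequality
sums the steps.
-/

open Set

theorem le_mul_of_chain {X : Type*} (d : X → X → ℝ) (htri : ∀ u v w, d u v ≤ d u w + d w v)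
    {C : ℝ} {w : ℕ → X} {N : ℕ} (hstep : ∀ i ≤ N, d (w i) (w (i + 1)) ≤ C) :
    d (w 0) (w (N + 1)) ≤ (N + 1) * C := by
  induction N with
  | zero => simpa using hstep 0 le_rfl
  | succ N ih =>
    calc d (w 0) (w (N + 2)) ≤ d (w 0) (w (N + 1)) + d (w (N + 1)) (w (N + 2)) := htri _ _ _
      _ ≤ (N + 1) * C + C := add_le_add (ih fun i hi => hstep i (by omega)) (hstep _ le_rfl)
      _ = (↑(N + 1) + 1) * C := by push_cast; ring

theorem dist_lineMap_div_lineMap_succ_div_le {E : Type*} [NormedAddCommGroup E]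
    [NormedSpace ℝ E] {x y : E} {N : ℕ} (h : dist x y ≤ N + 1) (i : ℕ) :
    dist (AffineMap.lineMap x y ((i : ℝ) / (N + 1)))
      (AffineMap.lineMap x y (((i + 1 : ℕ) : ℝ) / (N + 1))) ≤ 1 := by
  have hN : (0 : ℝ) < N + 1 := by positivity
  rw [dist_lineMap_lineMap, Real.dist_eq, Nat.cast_succ, ← sub_div, sub_add_cancel_left,
    abs_div, abs_neg, abs_one, abs_of_pos hN, div_mul_eq_mul_div, one_mul, div_le_one hN]
  exact h

theorem Submodule.convex_setOf_exists_norm_sub_add_le {E : Type*} [NormedAddCommGroup E]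
    [NormedSpace ℝ E] (P : Submodule ℝ E) (v₀ : E) (r : ℝ) :
    Convex ℝ {z : E | ∃ p ∈ P, ‖z - (p + v₀)‖ ≤ r} := by
  rintro x ⟨p, hp, hx⟩ y ⟨q, hq, hy⟩ a b ha hb hab
  refine ⟨a • p + b • q, P.add_mem (P.smul_mem a hp) (P.smul_mem b hq), ?_⟩
  have hcomb : a • x + b • y - (a • p + b • q + v₀) = a • (x - (p + v₀)) + b • (y - (q + v₀)) := by
    conv_lhs => rw [← one_smul ℝ v₀, ← hab]
    module
  have := convex_closedBall (0 : E) r (by simpa using hx) (by simpa using hy) ha hb hab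
  simpa [hcomb] using this

section AffineProjection

variable {E : Type*} [NormedAddCommGroup E] [InnerProductSpace ℝ E] (P : Submodule ℝ E)
  [P.HasOrthogonalProjection]

theorem Submodule.norm_sub_starProjection_le {y v : E} (hv : v ∈ P) :
    ‖y - P.starProjection y‖ ≤ ‖y - v‖ := by
  rw [Submodule.starProjection_minimal]
  exact ciInf_le ⟨0, forall_mem_range.mpr fun _ => norm_nonneg _⟩ (⟨v, hv⟩ : P)

theorem Submodule.norm_sub_starProjection_sub_add_le {v₀ z : E} {r : ℝ}
    (h : ∃ p ∈ P, ‖z - (p + v₀)‖ ≤ r) :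
    ‖z - (P.starProjection (z - v₀) + v₀)‖ ≤ r := by
  obtain ⟨p, hp, hz⟩ := h
  calc ‖z - (P.starProjection (z - v₀) + v₀)‖ = ‖(z - v₀) - P.starProjection (z - v₀)‖ := by
        congr 1; abel
    _ ≤ ‖(z - v₀) - p‖ := P.norm_sub_starProjection_le hp
    _ = ‖z - (p + v₀)‖ := by congr 1; abel
    _ ≤ r := hz

theorem Submodule.exists_chain_of_near_translate {F : Set E} {v₀ : E} {r : ℝ}
    (hFP : ∀ x ∈ F, ∃ p ∈ P, ‖x - (p + v₀)‖ ≤ r) (hPF : ∀ p ∈ P, ∃ x ∈ F, ‖x - (p + v₀)‖ ≤ r)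
    {x y : E} (hx : x ∈ F) (hy : y ∈ F) {N : ℕ} (hN : ‖x - y‖ ≤ N + 1) :
    ∃ w : ℕ → E, w 0 = x ∧ w (N + 1) = y ∧
      ∀ i ≤ N, w i ∈ F ∧ w (i + 1) ∈ F ∧ ‖w i - w (i + 1)‖ ≤ 2 * r + 1 := by
  set z : ℕ → E := fun i => AffineMap.lineMap x y ((i : ℝ) / (N + 1))
  set c : ℕ → E := fun i => P.starProjection (z i - v₀) + v₀
  have hzc (i : ℕ) (hi : i ≤ N + 1) : ‖z i - c i‖ ≤ r := by
    refine P.norm_sub_starProjection_sub_add_le <|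
      (P.convex_setOf_exists_norm_sub_add_le v₀ r).lineMap_mem (hFP x hx) (hFP y hy) ⟨?_, ?_⟩
    · positivity
    · rw [div_le_one (by positivity)]; exact_mod_cast hi
  have hcc (i : ℕ) : ‖c i - c (i + 1)‖ ≤ 1 := by
    calc ‖c i - c (i + 1)‖ = ‖P.starProjection (z i - z (i + 1))‖ := by
          simp only [c, map_sub]; congr 1; abel
      _ ≤ ‖z i - z (i + 1)‖ := P.norm_starProjection_apply_le _
      _ ≤ 1 := by
          rw [← dist_eq_norm]
          exact dist_lineMap_div_lineMap_succ_div_le (by rwa [dist_eq_norm]) i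
  have hchoice (i : ℕ) (hi : i ≤ N + 1) :
      ∃ u ∈ F, ‖u - c i‖ ≤ r ∧ (i = 0 → u = x) ∧ (i = N + 1 → u = y) := by
    rcases eq_or_ne i 0 with rfl | h0
    · exact ⟨x, hx, by simpa [z] using hzc 0 hi, fun _ => rfl, by omega⟩
    rcases eq_or_ne i (N + 1) with rfl | hN1
    · refine ⟨y, hy, ?_, by omega, fun _ => rfl⟩
      simpa [z, div_self (show (N : ℝ) + 1 ≠ 0 by positivity)] using hzc _ hi
    obtain ⟨u, hu, huc⟩ := hPF _ (P.starProjection_apply_mem (z i - v₀))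
    exact ⟨u, hu, huc, fun h => absurd h h0, fun h => absurd h hN1⟩
  choose! w hwF hwc hw0 hwN using hchoice
  refine ⟨w, hw0 0 (by omega) rfl, hwN _ le_rfl rfl, fun i hi =>
    ⟨hwF i (by omega), hwF _ (by omega), ?_⟩⟩
  calc ‖w i - w (i + 1)‖ ≤ ‖w i - c i‖ + ‖c i - c (i + 1)‖ + ‖c (i + 1) - w (i + 1)‖ :=
        by simpa only [dist_eq_norm] using dist_triangle4 (w i) (c i) (c (i + 1)) (w (i + 1))
    _ ≤ r + 1 + r := by
        gcongr
        · exact hwc i (by omega)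
        · exact hcc i
        · rw [norm_sub_rev]; exact hwc _ (by omega)
    _ = 2 * r + 1 := by ring

end AffineProjection

theorem stmt14_general (n : ℕ) (ℱ : Set (Set (EuclideanSpace ℝ (Fin n))))
    (P : Submodule ℝ (EuclideanSpace ℝ (Fin n))) (T : ℝ) (hT : 0 ≤ T)
    (φ : ℝ → ℝ) (hφ : Monotone φ)
    (d : EuclideanSpace ℝ (Fin n) → EuclideanSpace ℝ (Fin n) → ℝ)
    (hnear : ∀ F ∈ ℱ, ∃ v₀ : EuclideanSpace ℝ (Fin n),
      (∀ x ∈ F, ∃ p ∈ P, ‖x - (p + v₀)‖ ≤ 2 * T) ∧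
      (∀ p ∈ P, ∃ x ∈ F, ‖x - (p + v₀)‖ ≤ 2 * T))
    (htri : ∀ u v w, d u v ≤ d u w + d w v)
    (hgauge : ∀ F ∈ ℱ, ∀ A : ℝ, ∀ u ∈ F, ∀ v ∈ F, ‖u - v‖ ≤ A → d u v ≤ φ A) :
    ∀ F ∈ ℱ, ∀ x ∈ F, ∀ y ∈ F, d x y ≤ φ (4 * T + 1) * (‖x - y‖ + 1) := by
  intro F hF x hx y hy
  obtain ⟨v₀, hFP, hPF⟩ := hnear F hF
  have hφ_nonneg : 0 ≤ φ (4 * T + 1) := by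
    have := htri x x x
    have := hgauge F hF 0 x hx x hx (by simp)
    have := hφ (show 0 ≤ 4 * T + 1 by linarith)
    linarith
  set N := ⌊‖x - y‖⌋₊
  obtain ⟨w, hw0, hwN, hw⟩ :=
    P.exists_chain_of_near_translate hFP hPF hx hy (Nat.lt_floor_add_one (‖x - y‖)).le
  calc d x y = d (w 0) (w (N + 1)) := by rw [hw0, hwN]
    _ ≤ (N + 1) * φ (4 * T + 1) := le_mul_of_chain d htri fun i hi => by
        obtain ⟨hwi, hwi', hstep⟩ := hw i hi
        exact hgauge F hF _ _ hwi _ hwi' (hstep.trans_eq (by ring))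
    _ ≤ φ (4 * T + 1) * (‖x - y‖ + 1) := by
        rw [mul_comm]; gcongr; exact Nat.floor_le (norm_nonneg _)

/-- A ℤⁿ-invariant partition of ℝⁿ whose members stay 2T-close to translates of a fixed linear
hyperplane and are uniformly properly embedded with gauge φ is quasi-isometric:
d_F(x,y) ≤ φ(4T+1)·(‖x−y‖+1). -/
theorem stmt14 (n : ℕ) (ℱ : Set (Set (EuclideanSpace ℝ (Fin n))))
    (P : Submodule ℝ (EuclideanSpace ℝ (Fin n))) (T : ℝ) (hT : 0 ≤ T)
    (φ : ℝ → ℝ) (hφ : Monotone φ)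
    (d : EuclideanSpace ℝ (Fin n) → EuclideanSpace ℝ (Fin n) → ℝ)
    (hdisj : ℱ.Pairwise Disjoint)
    (hZinv : ∀ F ∈ ℱ, ∀ m : Fin n → ℤ,
      (fun x => x + (WithLp.toLp 2 (fun i => (m i : ℝ)) : EuclideanSpace ℝ (Fin n))) '' F ∈ ℱ)
    (hnear : ∀ F ∈ ℱ, ∃ v₀ : EuclideanSpace ℝ (Fin n),
      (∀ x ∈ F, ∃ p ∈ P, ‖x - (p + v₀)‖ ≤ 2 * T) ∧
      (∀ p ∈ P, ∃ x ∈ F, ‖x - (p + v₀)‖ ≤ 2 * T))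
    (htri : ∀ u v w, d u v ≤ d u w + d w v)
    (hgauge : ∀ F ∈ ℱ, ∀ A : ℝ, ∀ u ∈ F, ∀ v ∈ F, ‖u - v‖ ≤ A → d u v ≤ φ A) :
    ∀ F ∈ ℱ, ∀ x ∈ F, ∀ y ∈ F, d x y ≤ φ (4 * T + 1) * (‖x - y‖ + 1) :=
  stmt14_general n ℱ P T hT φ hφ d hnear htri hgauge
end
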